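/- Let η > 0 and k ≥ 1 be an integer. Let Q and Q_0 be functions on state-action pairs with ‖Q_0‖ ≤ V_max, and let π be the soft-max policy associated with k Q + Q_0, i.e. π(a|x) = exp(η(k Q(x,a) + Q_0(x,a))) / Σ_{a'} exp(η(k Q(x,a') + Q_0(x,a'))). Then ‖k T Q + T Q_0 − k T^π Q − T^π Q_0‖ ≤ γ(2 V_max + log(L)/η). -/

import Mathlib

/-!
At each successor state the two backups differ by the regret `k max Q + max Q₀ - ⟨π, k Q + Q₀⟩`,
averaged under `P(·|x,a)` and scaled by `γ`. With `Ψ = k Q + Q₀` the regret is the sum of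
`k max Q + max Q₀ - max Ψ ∈ [0, max Q₀ - min Q₀] ⊆ [0, 2 V_max]` and the soft-max suboptimality
`max Ψ - ⟨π, Ψ⟩ ∈ [0, log L / η]`: indeed `η ⟨π, Ψ⟩ = log Σ exp (η Ψ) + Σ π log π`, where
`log Σ exp (η Ψ) ≥ η max Ψ` and, by Jensen, the entropy `-Σ π log π` is at most `log L`.
-/

open Finset Real Filter

variable {X A : Type*}

/-- `(πQ)(x) = Σ_a π(a|x) Q(x,a)`. -/
noncomputable def polApply [Fintype A] (pol : X → A → ℝ) (Q : X → A → ℝ) : X → ℝ :=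
  fun x => ∑ a, pol x a * Q x a

/-- Bellman operator `T^π`. -/
noncomputable def bellman [Fintype X] [Fintype A]
    (P : X → A → X → ℝ) (r : X → A → ℝ) (γ : ℝ) (pol : X → A → ℝ)
    (Q : X → A → ℝ) : X → A → ℝ :=
  fun x a => r x a + γ * ∑ x', ∑ a', P x a x' * pol x' a' * Q x' a'

/-- Bellman optimality operator `T`. -/
noncomputable def bellmanOpt [Fintype X] [Fintype A] [Nonempty A]
    (P : X → A → X → ℝ) (r : X → A → ℝ) (γ : ℝ) (Q : X → A → ℝ) : X → A → ℝ :=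
  fun x a => r x a + γ * ∑ x', P x a x' * (Finset.univ.sup' Finset.univ_nonempty (Q x'))

/-- Soft-max policy associated with action preferences `Ψ` at inverse temperature `η`. -/
noncomputable def softmaxPol [Fintype A] (η : ℝ) (Ψ : X → A → ℝ) : X → A → ℝ :=
  fun x a => Real.exp (η * Ψ x a) / ∑ a', Real.exp (η * Ψ x a')

/-- Supremum norm over state-action pairs. -/
noncomputable def supNorm [Fintype X] [Fintype A] [Nonempty X] [Nonempty A]
    (Q : X → A → ℝ) : ℝ :=
  Finset.univ.sup' Finset.univ_nonempty (fun p : X × A => |Q p.1 p.2|)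

namespace Finset

variable {ι α : Type*} [LinearOrder α] [AddCommGroup α] [IsOrderedAddMonoid α]
  {s : Finset ι} (hs : s.Nonempty) (f g : ι → α)

lemma sup'_add_le : s.sup' hs (fun i => f i + g i) ≤ s.sup' hs f + s.sup' hs g :=
  sup'_le _ _ fun _ hi => add_le_add (le_sup' f hi) (le_sup' g hi)

lemma sup'_add_sup'_le :
    s.sup' hs f + s.sup' hs g ≤ s.sup' hs (fun i => f i + g i) + (s.sup' hs g - s.inf' hs g) := by
  obtain ⟨i, hi, hfi⟩ := exists_mem_eq_sup' hs f
  have : s.sup' hs f + s.inf' hs g ≤ s.sup' hs (fun i => f i + g i) :=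
    hfi ▸ le_sup'_of_le (fun i => f i + g i) hi (add_le_add le_rfl (inf'_le g hi))
  rw [add_sub, le_sub_iff_add_le]
  calc s.sup' hs f + s.sup' hs g + s.inf' hs g
      = s.sup' hs f + s.inf' hs g + s.sup' hs g := add_right_comm _ _ _
    _ ≤ _ := add_le_add this le_rfl

end Finset

section Simplex

variable {ι : Type*} [Fintype ι] {w : ι → ℝ}

lemma sum_mul_le_sup' [Nonempty ι] (hw0 : ∀ i, 0 ≤ w i) (hw1 : ∑ i, w i = 1) (f : ι → ℝ) :
    ∑ i, w i * f i ≤ univ.sup' univ_nonempty f :=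
  calc ∑ i, w i * f i ≤ ∑ i, w i * univ.sup' univ_nonempty f :=
        sum_le_sum fun i hi => mul_le_mul_of_nonneg_left (le_sup' f hi) (hw0 i)
    _ = univ.sup' univ_nonempty f := by rw [← sum_mul, hw1, one_mul]

lemma abs_sum_mul_le (hw0 : ∀ i, 0 ≤ w i) (hw1 : ∑ i, w i = 1) {f : ι → ℝ} {B : ℝ}
    (hf : ∀ i, |f i| ≤ B) : |∑ i, w i * f i| ≤ B :=
  calc |∑ i, w i * f i| ≤ ∑ i, w i * |f i| := (abs_sum_le_sum_abs _ _).trans_eq <|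
        sum_congr rfl fun i _ => by rw [abs_mul, abs_of_nonneg (hw0 i)]
    _ ≤ ∑ i, w i * B := sum_le_sum fun i _ => mul_le_mul_of_nonneg_left (hf i) (hw0 i)
    _ = B := by rw [← sum_mul, hw1, one_mul]

lemma neg_log_card_le_sum_mul_log (hw0 : ∀ i, 0 < w i) (hw1 : ∑ i, w i = 1) :
    -log (Fintype.card ι) ≤ ∑ i, w i * log (w i) := by
  have jensen := strictConcaveOn_log_Ioi.concaveOn.le_map_sum (t := univ) (p := fun i => (w i)⁻¹)
    (fun i _ => (hw0 i).le) hw1 fun i _ => inv_pos.mpr (hw0 i)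
  simp only [smul_eq_mul, log_inv, mul_neg, sum_neg_distrib] at jensen
  rw [sum_congr rfl fun i _ => mul_inv_cancel₀ (hw0 i).ne', sum_const, card_univ,
    nsmul_one] at jensen
  linarith

end Simplex

section Softmax

variable [Fintype A] [Nonempty A] (η : ℝ) (Ψ : X → A → ℝ) (x : X)

lemma softmaxPol_pos (a : A) : 0 < softmaxPol η Ψ x a :=
  div_pos (exp_pos _) (sum_pos (fun _ _ => exp_pos _) univ_nonempty)

lemma sum_softmaxPol : ∑ a, softmaxPol η Ψ x a = 1 := by
  simp only [softmaxPol, ← sum_div]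
  exact div_self (sum_pos (fun _ _ => exp_pos _) univ_nonempty).ne'

lemma log_softmaxPol (a : A) :
    log (softmaxPol η Ψ x a) = η * Ψ x a - log (∑ a', exp (η * Ψ x a')) := by
  rw [softmaxPol, log_div (exp_pos _).ne' (sum_pos (fun _ _ => exp_pos _) univ_nonempty).ne',
    log_exp]

lemma polApply_softmaxPol_le_sup' : polApply (softmaxPol η Ψ) Ψ x ≤ univ.sup' univ_nonempty (Ψ x) :=
  sum_mul_le_sup' (fun a => (softmaxPol_pos η Ψ x a).le) (sum_softmaxPol η Ψ x) (Ψ x)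

lemma mul_sup'_le_log_sum_exp :
    η * univ.sup' univ_nonempty (Ψ x) ≤ log (∑ a, exp (η * Ψ x a)) := by
  obtain ⟨a₀, -, ha₀⟩ := exists_mem_eq_sup' univ_nonempty (Ψ x)
  rw [ha₀, le_log_iff_exp_le (sum_pos (fun _ _ => exp_pos _) univ_nonempty)]
  exact single_le_sum (f := fun a => exp (η * Ψ x a)) (fun _ _ => (exp_pos _).le) (mem_univ a₀)

variable {η} in
lemma sup'_sub_le_polApply_softmaxPol (hη : 0 < η) :
    univ.sup' univ_nonempty (Ψ x) - log (Fintype.card A) / η ≤ polApply (softmaxPol η Ψ) Ψ x := by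
  have hη_mul : η * polApply (softmaxPol η Ψ) Ψ x =
      ∑ a, softmaxPol η Ψ x a * log (softmaxPol η Ψ x a) + log (∑ a, exp (η * Ψ x a)) := by
    rw [polApply, mul_sum, ← one_mul (log _), ← sum_softmaxPol η Ψ x, sum_mul, ← sum_add_distrib]
    exact sum_congr rfl fun a _ => by rw [log_softmaxPol]; ring
  have hent := neg_log_card_le_sum_mul_log (softmaxPol_pos η Ψ x) (sum_softmaxPol η Ψ x)
  have hmax := mul_sup'_le_log_sum_exp η Ψ x
  rw [sub_le_iff_le_add, ← mul_le_mul_iff_of_pos_left hη, mul_add, mul_div_cancel₀ _ hη.ne']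
  linarith

end Softmax

lemma abs_regret_softmaxPol_le [Fintype A] [Nonempty A] {η : ℝ} (hη : 0 < η) {c : ℝ}
    (hc : 0 ≤ c) (Q Q₀ : X → A → ℝ) (x : X) {V : ℝ} (hQ₀ : ∀ a, |Q₀ x a| ≤ V) :
    |c * univ.sup' univ_nonempty (Q x) + univ.sup' univ_nonempty (Q₀ x) -
        polApply (softmaxPol η fun x a => c * Q x a + Q₀ x a) (fun x a => c * Q x a + Q₀ x a) x|
      ≤ 2 * V + log (Fintype.card A) / η := by
  have hmul : c * univ.sup' univ_nonempty (Q x) = univ.sup' univ_nonempty fun a => c * Q x a :=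
    mul₀_sup' hc _ _ _
  have hsplit_le := univ.sup'_add_le univ_nonempty (fun a => c * Q x a) (Q₀ x)
  have hsplit_ge := univ.sup'_add_sup'_le univ_nonempty (fun a => c * Q x a) (Q₀ x)
  have hsup : univ.sup' univ_nonempty (Q₀ x) ≤ V :=
    sup'_le _ _ fun a _ => (le_abs_self _).trans (hQ₀ a)
  have hinf : -V ≤ univ.inf' univ_nonempty (Q₀ x) :=
    le_inf' _ _ fun a _ => neg_le_of_abs_le (hQ₀ a)
  have hV : 0 ≤ V := (abs_nonneg _).trans (hQ₀ (Classical.arbitrary A))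
  have hgreedy := polApply_softmaxPol_le_sup' η (fun x a => c * Q x a + Q₀ x a) x
  have hsoft := sup'_sub_le_polApply_softmaxPol (fun x a => c * Q x a + Q₀ x a) x hη
  have hlog : 0 ≤ log (Fintype.card A) / η := div_nonneg (log_natCast_nonneg _) hη.le
  rw [abs_le]
  constructor <;> linarith

lemma polApply_mul_add [Fintype A] (pol Q Q₀ : X → A → ℝ) (c : ℝ) (x : X) :
    polApply pol (fun x a => c * Q x a + Q₀ x a) x = c * polApply pol Q x + polApply pol Q₀ x := by
  simp only [polApply, mul_sum, ← sum_add_distrib]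
  exact sum_congr rfl fun _ _ => by ring

section Bellman

variable [Fintype X] [Fintype A] (P : X → A → X → ℝ) (r : X → A → ℝ) (γ : ℝ)
  (pol Q Q₀ : X → A → ℝ) (c : ℝ) (x : X) (a : A)

lemma bellman_apply :
    bellman P r γ pol Q x a = r x a + γ * ∑ x', P x a x' * polApply pol Q x' := by
  simp only [bellman, polApply, mul_sum, mul_assoc]

lemma mul_bellmanOpt_add_sub_bellman [Nonempty A] :
    c * bellmanOpt P r γ Q x a + bellmanOpt P r γ Q₀ x a - c * bellman P r γ pol Q x a -
        bellman P r γ pol Q₀ x a =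
      γ * ∑ x', P x a x' * (c * univ.sup' univ_nonempty (Q x') + univ.sup' univ_nonempty (Q₀ x') -
        polApply pol (fun x a => c * Q x a + Q₀ x a) x') := by
  simp only [bellmanOpt, bellman_apply, polApply_mul_add, mul_sub, mul_add, sum_sub_distrib,
    sum_add_distrib, mul_sum]
  ring_nf

end Bellman

lemma abs_le_supNorm [Fintype X] [Fintype A] [Nonempty X] [Nonempty A] (Q : X → A → ℝ)
    (x : X) (a : A) : |Q x a| ≤ supNorm Q :=
  le_sup' (fun p : X × A => |Q p.1 p.2|) (mem_univ (x, a))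

lemma supNorm_le [Fintype X] [Fintype A] [Nonempty X] [Nonempty A] {Q : X → A → ℝ} {B : ℝ}
    (h : ∀ x a, |Q x a| ≤ B) : supNorm Q ≤ B :=
  sup'_le _ _ fun p _ => h p.1 p.2

theorem soft_bellman_difference_bound_general
    {X A : Type*} [Fintype X] [Fintype A] [Nonempty X] [Nonempty A]
    (P : X → A → X → ℝ) (hP0 : ∀ x a x', 0 ≤ P x a x') (hP1 : ∀ x a, ∑ x', P x a x' = 1)
    (r : X → A → ℝ)
    (γ : ℝ) (hγ0 : 0 ≤ γ)
    (Vmax : ℝ)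
    (η : ℝ) (hη : 0 < η)
    (k : ℕ)
    (Q Q₀ : X → A → ℝ) (hQ₀ : supNorm Q₀ ≤ Vmax)
    (pol : X → A → ℝ)
    (hpol : pol = softmaxPol η (fun x a => (k : ℝ) * Q x a + Q₀ x a)) :
    supNorm (fun x a =>
        (k : ℝ) * bellmanOpt P r γ Q x a + bellmanOpt P r γ Q₀ x a -
          (k : ℝ) * bellman P r γ pol Q x a - bellman P r γ pol Q₀ x a) ≤
      γ * (2 * Vmax + Real.log (Fintype.card A) / η) := by
  subst hpol
  refine supNorm_le fun x a => ?_
  rw [mul_bellmanOpt_add_sub_bellman, abs_mul, abs_of_nonneg hγ0]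
  exact mul_le_mul_of_nonneg_left (abs_sum_mul_le (hP0 x a) (hP1 x a) fun x' =>
    abs_regret_softmaxPol_le hη k.cast_nonneg Q Q₀ x' fun a' =>
      (abs_le_supNorm Q₀ x' a').trans hQ₀) hγ0

/-- Lemma 6 of the paper: bound on the difference between applying the Bellman
optimality operator and the Bellman operator of the soft-max policy associated with
`k Q + Q_0` to `k Q + Q_0`. -/
theorem soft_bellman_difference_bound
    {X A : Type*} [Fintype X] [Fintype A] [Nonempty X] [Nonempty A]
    (P : X → A → X → ℝ) (hP0 : ∀ x a x', 0 ≤ P x a x') (hP1 : ∀ x a, ∑ x', P x a x' = 1)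
    (r : X → A → ℝ) (Rmax : ℝ) (hR : 0 < Rmax) (hr : ∀ x a, |r x a| ≤ Rmax)
    (γ : ℝ) (hγ0 : 0 ≤ γ) (hγ1 : γ < 1)
    (Vmax : ℝ) (hV : Vmax = Rmax / (1 - γ))
    (η : ℝ) (hη : 0 < η)
    (k : ℕ) (hk : 1 ≤ k)
    (Q Q₀ : X → A → ℝ) (hQ₀ : supNorm Q₀ ≤ Vmax)
    (pol : X → A → ℝ)
    (hpol : pol = softmaxPol η (fun x a => (k : ℝ) * Q x a + Q₀ x a)) :
    supNorm (fun x a =>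
        (k : ℝ) * bellmanOpt P r γ Q x a + bellmanOpt P r γ Q₀ x a -
          (k : ℝ) * bellman P r γ pol Q x a - bellman P r γ pol Q₀ x a) ≤
      γ * (2 * Vmax + Real.log (Fintype.card A) / η) :=
  soft_bellman_difference_bound_general P hP0 hP1 r γ hγ0 Vmax η hη k Q Q₀ hQ₀ pol hpol
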